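/- arXiv:2507.15865 — 4 statements merged into one kernel-verified Lean document; each statement's English description precedes it below -/
import Mathlib

section
/- Approximate Parseval inequality: Let X be a finite set and let h₁,...,hₙ and φ be functions from X to ℝᵏ. Define the inner product ⟨f,g⟩ = E_x⟨f(x),g(x)⟩ where x is uniform on X. Let E_{ij} = ⟨h_i,h_j⟩ − δ_{ij} and ε = sqrt((1/n²)Σ_{i,j} E_{ij}²). Then (1/n)Σ_i ⟨h_i,φ⟩² ≤ (1/n + ε)·⟨φ,φ⟩. -/
noncomputable def ip {X : Type*} [Fintype X] {k : ℕ} (f g : X → Fin k → ℝ) : ℝ :=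
  (∑ x : X, ∑ j : Fin k, f x j * g x j) / (Fintype.card X : ℝ)

lemma ip_nonneg {X : Type*} [Fintype X] {k : ℕ} (f : X → Fin k → ℝ) : 0 ≤ ip f f := by
  unfold ip
  apply div_nonneg
  · apply Finset.sum_nonneg; intro x _; apply Finset.sum_nonneg; intro j _; exact mul_self_nonneg _
  · positivity

lemma ip_comm {X : Type*} [Fintype X] {k : ℕ} (f g : X → Fin k → ℝ) : ip f g = ip g f := by
  unfold ip
  congr 1
  exact Finset.sum_congr rfl fun x _ => Finset.sum_congr rfl fun j _ => mul_comm _ _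

lemma ip_cs {X : Type*} [Fintype X] [Nonempty X] {k : ℕ} (f g : X → Fin k → ℝ) :
    (ip f g) ^ 2 ≤ ip f f * ip g g := by
  have hc : (0:ℝ) < (Fintype.card X : ℝ) := by
    exact_mod_cast Fintype.card_pos
  unfold ip
  rw [div_pow, div_mul_div_comm, ← sq]
  gcongr ?_ / _
  calc (∑ x : X, ∑ j : Fin k, f x j * g x j) ^ 2
      = (∑ p : X × Fin k, f p.1 p.2 * g p.1 p.2) ^ 2 := by rw [Fintype.sum_prod_type]
    _ ≤ (∑ p : X × Fin k, (f p.1 p.2) ^ 2) * ∑ p : X × Fin k, (g p.1 p.2) ^ 2 :=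
        Finset.sum_mul_sq_le_sq_mul_sq _ _ _
    _ = _ := by simp [Fintype.sum_prod_type, sq]

lemma ip_sum_left {X : Type*} [Fintype X] {k n : ℕ} (a : Fin n → ℝ)
    (h : Fin n → X → Fin k → ℝ) (g : X → Fin k → ℝ) :
    ip (fun x j => ∑ i, a i * h i x j) g = ∑ i, a i * ip (h i) g := by
  unfold ip
  rw [eq_comm]
  simp only [← mul_div_assoc]
  rw [← Finset.sum_div]
  congr 1
  simp only [Finset.mul_sum, Finset.sum_mul]
  rw [Finset.sum_comm]
  refine Finset.sum_congr rfl fun x _ => ?_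
  rw [Finset.sum_comm]
  refine Finset.sum_congr rfl fun j _ => Finset.sum_congr rfl fun i _ => by ring

theorem stmt_7 {X : Type*} [Fintype X] [Nonempty X] {k n : ℕ} (hn : 0 < n)
    (h : Fin n → X → Fin k → ℝ) (φ : X → Fin k → ℝ) (ε : ℝ)
    (hε : ε = Real.sqrt ((∑ i : Fin n, ∑ j : Fin n,
      (ip (h i) (h j) - if i = j then 1 else 0) ^ 2) / (n : ℝ) ^ 2)) :
    (∑ i : Fin n, (ip (h i) φ) ^ 2) / (n : ℝ) ≤ (1 / (n : ℝ) + ε) * ip φ φ := by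
  set a : Fin n → ℝ := fun i => ip (h i) φ with ha
  set S : ℝ := ∑ i, a i ^ 2 with hS
  set E : Fin n → Fin n → ℝ := fun i j => ip (h i) (h j) - if i = j then 1 else 0 with hE
  set T : ℝ := ∑ i : Fin n, ∑ j : Fin n, E i j ^ 2 with hT
  have hT0 : 0 ≤ T := by
    apply Finset.sum_nonneg; intro i _; apply Finset.sum_nonneg; intro j _; positivity
  have hS0 : 0 ≤ S := by apply Finset.sum_nonneg; intro i _; positivity
  have hε0 : 0 ≤ ε := hε ▸ Real.sqrt_nonneg _
  have hφ0 : 0 ≤ ip φ φ := ip_nonneg φ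
  have hnR : (0:ℝ) < (n:ℝ) := by exact_mod_cast hn
  have hnε : (n:ℝ) * ε = Real.sqrt T := by
    rw [hε, Real.sqrt_div hT0, Real.sqrt_sq hnR.le, mul_div_cancel₀ _ hnR.ne']
  set g : X → Fin k → ℝ := fun x j => ∑ i, a i * h i x j with hg
  have hgφ : ip g φ = S := by
    rw [hg, ip_sum_left]
    exact Finset.sum_congr rfl fun i _ => by rw [sq]
  have e1 : ip g g = ∑ i, ∑ j, a i * a j * ip (h i) (h j) := by
    rw [hg, ip_sum_left]
    refine Finset.sum_congr rfl fun i _ => ?_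
    rw [ip_comm, ip_sum_left, Finset.mul_sum]
    exact Finset.sum_congr rfl fun j _ => by rw [ip_comm (h j) (h i)]; ring
  have e2 : ip g g = S + ∑ i, ∑ j, a i * a j * E i j := by
    rw [e1]
    have hsplit : ∀ i j, a i * a j * ip (h i) (h j)
        = a i * a j * E i j + a i * a j * (if i = j then 1 else 0) := by
      intro i j; rw [hE]; ring
    simp only [hsplit, Finset.sum_add_distrib]
    have hδ : ∑ i, ∑ j : Fin n, a i * a j * (if i = j then 1 else 0) = S := by
      rw [hS]
      refine Finset.sum_congr rfl fun i _ => ?_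
      simp [mul_ite, Finset.sum_ite_eq, sq]
    rw [hδ]; ring
  have hD : ∑ i, ∑ j, a i * a j * E i j ≤ S * Real.sqrt T := by
    set D : ℝ := ∑ i, ∑ j, a i * a j * E i j with hDd
    have hD2 : D ^ 2 ≤ S ^ 2 * T := by
      have hcs := Finset.sum_mul_sq_le_sq_mul_sq Finset.univ
        (fun p : Fin n × Fin n => a p.1 * a p.2) (fun p : Fin n × Fin n => E p.1 p.2)
      have e3 : ∑ p : Fin n × Fin n, a p.1 * a p.2 * E p.1 p.2 = D := by
        rw [hDd, Fintype.sum_prod_type]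
      have e4 : ∑ p : Fin n × Fin n, (a p.1 * a p.2) ^ 2 = S ^ 2 := by
        rw [Fintype.sum_prod_type, hS, sq (∑ i, a i ^2), Finset.sum_mul_sum]
        exact Finset.sum_congr rfl fun i _ => Finset.sum_congr rfl fun j _ => by ring
      have e5 : ∑ p : Fin n × Fin n, (E p.1 p.2) ^ 2 = T := by
        rw [hT, Fintype.sum_prod_type]
      rwa [e3, e4, e5] at hcs
    calc D ≤ |D| := le_abs_self _
      _ = Real.sqrt (D ^ 2) := (Real.sqrt_sq_eq_abs D).symm
      _ ≤ Real.sqrt (S ^ 2 * T) := Real.sqrt_le_sqrt hD2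
      _ = S * Real.sqrt T := by rw [Real.sqrt_mul (sq_nonneg S), Real.sqrt_sq hS0]
  have hgg : ip g g ≤ S * (1 + (n:ℝ) * ε) := by
    rw [e2, hnε]; nlinarith [hD]
  have hS2 : S ^ 2 ≤ S * (1 + (n:ℝ) * ε) * ip φ φ := by
    calc S ^ 2 = (ip g φ) ^ 2 := by rw [hgφ]
      _ ≤ ip g g * ip φ φ := ip_cs g φ
      _ ≤ S * (1 + (n:ℝ) * ε) * ip φ φ := mul_le_mul_of_nonneg_right hgg hφ0
  have key : S ≤ (1 + (n:ℝ) * ε) * ip φ φ := by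
    rcases eq_or_lt_of_le hS0 with h0 | h0
    · rw [← h0]; positivity
    · have := hS2
      rw [pow_two, mul_assoc] at this
      exact le_of_mul_le_mul_left this h0
  have hfinal : (1 / (n:ℝ) + ε) = (1 + (n:ℝ) * ε) / (n:ℝ) := by
    field_simp
  rw [hfinal, div_mul_eq_mul_div]
  exact div_le_div_of_nonneg_right key hnR.le |>.trans_eq rfl
end

section
/- Shortest-path parity lemma: In the layered graph G_π(x) defined from a permutation π ∈ S_n and input x ∈ {±1}ⁿ, the shortest path from s to t passes through the top-row vertex a₀ if and only if the product of x_{π(j)} over odd indices j ∈ {1,...,n} equals +1; equivalently, the shortest path has cost 0 if and only if the number of j odd with x_{π(j)} = −1 is even (in which case it starts at a₀), and otherwise the shortest s–t path starting correctly passes through b₀. -/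
/-- A path through the layered graph, encoded by its row at each level
(`true` = top row `a`, `false` = bottom row `b`).  Cross edges exist only at odd
levels (edge `j : Fin n` goes from level `j` to level `j+1` and is the paper's
level `j+1`, so it is odd iff `j.val` is even). -/
def validPath (n : ℕ) (r : Fin (n + 1) → Bool) : Prop :=
  ∀ j : Fin n, j.val % 2 = 1 → r j.castSucc = r j.succ

/-- Total weight of the path: at odd levels, a straight edge costs `0` when the
bit is `1` and `1` when the bit is `-1`, and vice versa for cross edges; even
levels cost `0`. -/
def pathCost (n : ℕ) (x : Fin n → ℤ) (π : Equiv.Perm (Fin n)) (r : Fin (n + 1) → Bool) : ℤ :=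
  ∑ j : Fin n, if j.val % 2 = 0 then
      (if r j.castSucc = r j.succ then (if x (π j) = 1 then 0 else 1)
        else (if x (π j) = 1 then 1 else 0))
    else 0

/-- Partial product of the even-index bits below level `k`. -/
def Pp (n : ℕ) (x : Fin n → ℤ) (π : Equiv.Perm (Fin n)) (k : ℕ) : ℤ :=
  ∏ j ∈ Finset.univ.filter (fun j : Fin n => j.val < k ∧ j.val % 2 = 0), x (π j)

lemma Pp_pm (n : ℕ) (x : Fin n → ℤ) (hx : ∀ i, x i = 1 ∨ x i = -1)
    (π : Equiv.Perm (Fin n)) (k : ℕ) : Pp n x π k = 1 ∨ Pp n x π k = -1 := by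
  apply Finset.prod_induction _ (fun z => z = 1 ∨ z = -1)
  · rintro a b (ha | ha) (hb | hb) <;> simp [ha, hb]
  · left; rfl
  · intro i _; exact hx _

lemma Pp_succ (n : ℕ) (x : Fin n → ℤ) (π : Equiv.Perm (Fin n)) (j : Fin n) :
    Pp n x π (j.val + 1) = Pp n x π j.val * (if j.val % 2 = 0 then x (π j) else 1) := by
  by_cases he : j.val % 2 = 0
  · have hset : Finset.univ.filter (fun i : Fin n => i.val < j.val + 1 ∧ i.val % 2 = 0)
        = insert j (Finset.univ.filter (fun i : Fin n => i.val < j.val ∧ i.val % 2 = 0)) := by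
      ext i
      simp only [Finset.mem_filter, Finset.mem_univ, true_and, Finset.mem_insert]
      constructor
      · rintro ⟨h1, h2⟩
        rcases Nat.lt_succ_iff_lt_or_eq.mp h1 with h | h
        · exact Or.inr ⟨h, h2⟩
        · exact Or.inl (Fin.ext h)
      · rintro (rfl | ⟨h1, h2⟩)
        · exact ⟨Nat.lt_succ_self _, he⟩
        · exact ⟨Nat.lt_succ_of_lt h1, h2⟩
    have hnot : j ∉ Finset.univ.filter (fun i : Fin n => i.val < j.val ∧ i.val % 2 = 0) := by
      simp
    rw [Pp, hset, Finset.prod_insert hnot, if_pos he, mul_comm]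
    rfl
  · have hset : Finset.univ.filter (fun i : Fin n => i.val < j.val + 1 ∧ i.val % 2 = 0)
        = Finset.univ.filter (fun i : Fin n => i.val < j.val ∧ i.val % 2 = 0) := by
      ext i
      simp only [Finset.mem_filter, Finset.mem_univ, true_and]
      constructor
      · rintro ⟨h1, h2⟩
        rcases Nat.lt_succ_iff_lt_or_eq.mp h1 with h | h
        · exact ⟨h, h2⟩
        · exact absurd (h ▸ h2) he
      · rintro ⟨h1, h2⟩
        exact ⟨Nat.lt_succ_of_lt h1, h2⟩
    rw [Pp, hset, if_neg he, mul_one]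
    rfl

lemma tel : ∀ (n : ℕ) (g : Fin (n + 1) → ℤ), (∀ k, g k = 1 ∨ g k = -1) →
    ∏ j : Fin n, g j.succ * g j.castSucc = g (Fin.last n) * g 0 := by
  intro n
  induction n with
  | zero =>
    intro g hg
    rcases hg 0 with h | h <;> simp [Fin.last, h]
  | succ n ih =>
    intro g hg
    rw [Fin.prod_univ_castSucc]
    have h1 : ∀ j : Fin n, g (Fin.castSucc j).succ * g (Fin.castSucc j).castSucc
        = (g ∘ Fin.castSucc) j.succ * (g ∘ Fin.castSucc) j.castSucc := by
      intro j
      simp only [Function.comp, Fin.succ_castSucc]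
    calc (∏ j : Fin n, g (Fin.castSucc j).succ * g (Fin.castSucc j).castSucc)
          * (g (Fin.last n).succ * g (Fin.last n).castSucc)
        = ((g ∘ Fin.castSucc) (Fin.last n) * (g ∘ Fin.castSucc) 0)
          * (g (Fin.last n).succ * g (Fin.last n).castSucc) := by
          rw [Finset.prod_congr rfl (fun j _ => h1 j), ih (g ∘ Fin.castSucc) (fun k => hg _)]
      _ = g (Fin.last (n + 1)) * g 0 := by
          have : (Fin.last n).succ = Fin.last (n + 1) := rfl
          simp only [Function.comp, this]
          rcases hg (Fin.castSucc (Fin.last n)) with h | h <;>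
            rcases hg (Fin.castSucc 0) with h0 | h0 <;>
            simp [h, h0, Fin.castSucc_zero] <;> ring

theorem stmt_11 (n : ℕ) (hn : 2 ≤ n) (hne : Even n) (x : Fin n → ℤ)
    (hx : ∀ i, x i = 1 ∨ x i = -1) (π : Equiv.Perm (Fin n)) :
    ((∃ r : Fin (n + 1) → Bool, validPath n r ∧ r (Fin.last n) = true ∧ r 0 = true ∧
        pathCost n x π r = 0) ↔
      (∏ j ∈ Finset.univ.filter (fun j : Fin n => j.val % 2 = 0), x (π j)) = 1)
    ∧
    ((∃ r : Fin (n + 1) → Bool, validPath n r ∧ r (Fin.last n) = true ∧ r 0 = false ∧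
        pathCost n x π r = 0) ↔
      (∏ j ∈ Finset.univ.filter (fun j : Fin n => j.val % 2 = 0), x (π j)) = -1) := by
  set P : ℤ := ∏ j ∈ Finset.univ.filter (fun j : Fin n => j.val % 2 = 0), x (π j) with hPdef
  have hPpn : Pp n x π n = P := by
    rw [Pp, hPdef]
    congr 1
    ext i
    simp [i.isLt]
  have hPpm : P = 1 ∨ P = -1 := hPpn ▸ Pp_pm n x hx π n
  -- Forward direction: any zero-cost valid path determines P from its endpoints.
  have fwd : ∀ r : Fin (n + 1) → Bool, validPath n r → pathCost n x π r = 0 →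
      (if r (Fin.last n) = r 0 then (1 : ℤ) else -1) = P := by
    intro r hv hc
    set g : Fin (n + 1) → ℤ := fun k => if r k then 1 else -1 with hg
    have hgpm : ∀ k, g k = 1 ∨ g k = -1 := by
      intro k; by_cases h : r k <;> simp [hg, h]
    have hterm : ∀ j ∈ Finset.univ, (0:ℤ) ≤ (if j.val % 2 = 0 then
        (if r j.castSucc = r j.succ then (if x (π j) = 1 then 0 else 1)
          else (if x (π j) = 1 then 1 else 0)) else 0 : ℤ) := by
      intro j _
      split_ifs <;> norm_num
    have hzero := (Finset.sum_eq_zero_iff_of_nonneg hterm).mp hc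
    have hstep : ∀ j : Fin n, g j.succ * g j.castSucc = if j.val % 2 = 0 then x (π j) else 1 := by
      intro j
      have hz := hzero j (Finset.mem_univ j)
      by_cases he : j.val % 2 = 0
      · rw [if_pos he] at hz ⊢
        rcases hx (π j) with hx1 | hx1 <;> rw [hx1] at hz ⊢ <;>
          cases h1 : r j.castSucc <;> cases h2 : r j.succ <;>
          simp [hg, h1, h2] at hz ⊢
      · rw [if_neg he]
        have hodd : j.val % 2 = 1 := Nat.mod_two_eq_zero_or_one j.val |>.resolve_left he
        have hrr := hv j hodd
        cases h1 : r j.castSucc <;> rw [h1] at hrr <;> simp [hg, h1, ← hrr]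
    have hprod : ∏ j : Fin n, g j.succ * g j.castSucc = P := by
      rw [Finset.prod_congr rfl (fun j _ => hstep j), hPdef, Finset.prod_filter]
    rw [tel n g hgpm] at hprod
    rw [← hprod, hg]
    by_cases h1 : r (Fin.last n) <;> by_cases h0 : r 0 <;> simp [h1, h0]
  -- Construction: for each target sign c, a zero-cost valid path.
  have bwd : ∀ c : ℤ, c = 1 ∨ c = -1 → ∃ r : Fin (n + 1) → Bool, validPath n r ∧
      r (Fin.last n) = decide (P = c) ∧ r 0 = decide ((1:ℤ) = c) ∧ pathCost n x π r = 0 := by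
    intro c hcpm
    refine ⟨fun k => decide (Pp n x π k.val = c), ?_, ?_, ?_, ?_⟩
    · intro j hodd
      have h := Pp_succ n x π j
      rw [if_neg (by omega), mul_one] at h
      simp only [Fin.coe_castSucc, Fin.val_succ, h]
    · simp [hPpn]
    · have : Pp n x π 0 = 1 := by
        rw [Pp]
        apply Finset.prod_eq_one
        intro i hi
        simp at hi
      simp [this]
    · rw [pathCost]
      apply Finset.sum_eq_zero
      intro j _
      by_cases he : j.val % 2 = 0
      · rw [if_pos he]
        have h := Pp_succ n x π j
        rw [if_pos he] at h
        simp only [Fin.coe_castSucc, Fin.val_succ]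
        rcases hx (π j) with hx1 | hx1
        · rw [hx1, mul_one] at h
          simp [h, hx1]
        · rw [hx1] at h
          have hne2 : decide (Pp n x π j.val = c) ≠ decide (Pp n x π (j.val + 1) = c) := by
            rcases Pp_pm n x hx π j.val with hp | hp <;> rcases hcpm with rfl | rfl <;>
              simp [h, hp]
          rw [if_neg hne2, if_neg (by rw [hx1]; norm_num)]
      · rw [if_neg he]
  constructor
  · constructor
    · rintro ⟨r, hv, hl, h0, hc⟩
      have := fwd r hv hc
      rw [hl, h0, if_pos rfl] at this
      exact this.symm
    · intro hP
      obtain ⟨r, hv, hl, h0, hc⟩ := bwd 1 (Or.inl rfl)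
      exact ⟨r, hv, by simp [hl, hP], by simp [h0], hc⟩
  · constructor
    · rintro ⟨r, hv, hl, h0, hc⟩
      have := fwd r hv hc
      rw [hl, h0, if_neg (by simp)] at this
      exact this.symm
    · intro hP
      obtain ⟨r, hv, hl, h0, hc⟩ := bwd (-1) (Or.inr rfl)
      exact ⟨r, hv, by simp [hl, hP], by simp [h0], hc⟩
end

section
/- In the layered graph G_π(x), a path from s to t following the greedy rule 'always traverse an outgoing edge of weight 0' starting with edge (s,a₀) when Π_{j odd} x_{π(j)} = +1 (and (s,b₀) otherwise) reaches aₙ and achieves total cost 0, hence is a shortest path. -/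
/-- The greedy zero-cost trajectory: start on the top row iff the parity
product is `+1`, and at every odd level follow the outgoing edge of weight
zero (stay if the bit is `1`, switch if it is `-1`). -/
def greedy (n : ℕ) (x : Fin n → ℤ) (π : Equiv.Perm (Fin n)) : Fin (n + 1) → Bool :=
  fun j => decide
    (((∏ i ∈ Finset.univ.filter (fun i : Fin n => i.val % 2 = 0), x (π i)) *
      ∏ i ∈ Finset.univ.filter (fun i : Fin n => i.val < j.val ∧ i.val % 2 = 0), x (π i)) = 1)

lemma prod_pm (n : ℕ) (x : Fin n → ℤ) (hx : ∀ i, x i = 1 ∨ x i = -1)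
    (π : Equiv.Perm (Fin n)) (s : Finset (Fin n)) :
    (∏ i ∈ s, x (π i)) = 1 ∨ (∏ i ∈ s, x (π i)) = -1 := by
  induction s using Finset.induction with
  | empty => simp
  | @insert a s h ih =>
    rw [Finset.prod_insert h]
    rcases hx (π a) with h1 | h1 <;> rcases ih with h2 | h2 <;> simp [h1, h2]

lemma decide_flip (P Q : ℤ) (hP : P = 1 ∨ P = -1) (hQ : Q = 1 ∨ Q = -1) :
    decide (P * Q = 1) ≠ decide (P * (-1 * Q) = 1) := by
  rcases hP with hp | hp <;> rcases hQ with hq | hq <;> subst hp <;> subst hq <;> decide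

theorem stmt_12 (n : ℕ) (hn : 2 ≤ n) (hne : Even n) (x : Fin n → ℤ)
    (hx : ∀ i, x i = 1 ∨ x i = -1) (π : Equiv.Perm (Fin n)) :
    validPath n (greedy n x π) ∧
    greedy n x π (Fin.last n) = true ∧
    greedy n x π 0 = decide
      ((∏ j ∈ Finset.univ.filter (fun j : Fin n => j.val % 2 = 0), x (π j)) = 1) ∧
    pathCost n x π (greedy n x π) = 0 ∧
    ∀ r : Fin (n + 1) → Bool, validPath n r → r (Fin.last n) = true →
      pathCost n x π (greedy n x π) ≤ pathCost n x π r := by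
  have hfilter : ∀ j : Fin n, j.val % 2 = 1 →
      (Finset.univ.filter (fun i : Fin n => i.val < (j.castSucc).val ∧ i.val % 2 = 0))
      = Finset.univ.filter (fun i : Fin n => i.val < (j.succ).val ∧ i.val % 2 = 0) := by
    intro j hj
    ext i
    simp only [Finset.mem_filter, Finset.mem_univ, true_and, Fin.coe_castSucc, Fin.val_succ]
    constructor
    · rintro ⟨h1, h2⟩; exact ⟨by omega, h2⟩
    · rintro ⟨h1, h2⟩; exact ⟨by omega, h2⟩
  have hvalid : validPath n (greedy n x π) := by
    intro j hj
    unfold greedy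
    rw [hfilter j hj]
  have hinsert : ∀ j : Fin n, j.val % 2 = 0 →
      (Finset.univ.filter (fun i : Fin n => i.val < (j.succ).val ∧ i.val % 2 = 0))
      = insert j (Finset.univ.filter (fun i : Fin n => i.val < (j.castSucc).val ∧ i.val % 2 = 0)) := by
    intro j hj
    ext i
    simp only [Finset.mem_filter, Finset.mem_univ, true_and, Fin.coe_castSucc, Fin.val_succ,
      Finset.mem_insert]
    constructor
    · rintro ⟨h1, h2⟩
      rcases eq_or_lt_of_le (Nat.lt_succ_iff.mp h1) with h | h
      · left; exact Fin.ext h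
      · right; exact ⟨h, h2⟩
    · rintro (rfl | ⟨h1, h2⟩)
      · exact ⟨Nat.lt_succ_self _, hj⟩
      · exact ⟨by omega, h2⟩
  have hPpm := prod_pm n x hx π (Finset.univ.filter (fun i : Fin n => i.val % 2 = 0))
  have hcost : pathCost n x π (greedy n x π) = 0 := by
    unfold pathCost
    apply Finset.sum_eq_zero
    intro j _
    by_cases hj : j.val % 2 = 0
    · simp only [hj, if_true]
      have hnot : j ∉ Finset.univ.filter (fun i : Fin n => i.val < (j.castSucc).val ∧ i.val % 2 = 0) := by
        simp
      have hsucc : (∏ i ∈ Finset.univ.filter (fun i : Fin n => i.val < (j.succ).val ∧ i.val % 2 = 0), x (π i))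
          = x (π j) * ∏ i ∈ Finset.univ.filter (fun i : Fin n => i.val < (j.castSucc).val ∧ i.val % 2 = 0), x (π i) := by
        rw [hinsert j hj, Finset.prod_insert hnot]
      have hQpm := prod_pm n x hx π (Finset.univ.filter (fun i : Fin n => i.val < (j.castSucc).val ∧ i.val % 2 = 0))
      rcases hx (π j) with h1 | h1
      · have heq : greedy n x π j.castSucc = greedy n x π j.succ := by
          unfold greedy; rw [hsucc, h1, one_mul]
        simp [heq, h1]
      · have hne' : greedy n x π j.castSucc ≠ greedy n x π j.succ := by
          unfold greedy
          rw [hsucc, h1]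
          exact decide_flip _ _ hPpm hQpm
        simp [hne', h1]
    · simp [hj]
  refine ⟨hvalid, ?_, ?_, hcost, ?_⟩
  · unfold greedy
    have hset : (Finset.univ.filter (fun i : Fin n => i.val < (Fin.last n).val ∧ i.val % 2 = 0))
        = Finset.univ.filter (fun i : Fin n => i.val % 2 = 0) := by
      ext i; simp [i.isLt]
    rw [hset]
    rcases hPpm with hp | hp <;> rw [hp] <;> norm_num
  · unfold greedy
    have hset : (Finset.univ.filter (fun i : Fin n => i.val < (0 : Fin (n+1)).val ∧ i.val % 2 = 0))
        = (∅ : Finset (Fin n)) := by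
      ext i; simp
    rw [hset]
    simp
  · intro r _ _
    rw [hcost]
    unfold pathCost
    apply Finset.sum_nonneg
    intro j _
    split_ifs <;> norm_num
end

section
/- If each h_i : X → ℝᵏ satisfies ⟨h_i, h_i⟩ = 1 and |⟨h_i, h_j⟩| ≤ 2^{−t_{ij}} for i ≠ j where t_{ij} ≥ 2, and the fraction of pairs (i,j), i ≠ j, with t_{ij} = d is at most 1/(m−d)! for 2 ≤ d ≤ m−1 and the rest have t_{ij} = m, then the average of (⟨h_i,h_j⟩ − δ_{ij})² over all pairs is at most e⁴·4^{−m}. -/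
lemma key_sum (m : ℕ) :
    ∑ d ∈ Finset.range (m + 1), ((4 : ℝ) ^ d)⁻¹ / (Nat.factorial (m - d)) ≤
      Real.exp 4 / 4 ^ m := by
  have hreflect := Finset.sum_range_reflect (fun j => (4 : ℝ) ^ j / (Nat.factorial j)) (m + 1)
  have hA : ∑ d ∈ Finset.range (m + 1), (4 : ℝ) ^ (m - d) / (Nat.factorial (m - d)) ≤
      Real.exp 4 := by
    simp only [Nat.add_sub_cancel] at hreflect
    rw [hreflect]
    exact Real.sum_le_exp_of_nonneg (by norm_num) _
  have heq : ∀ d ∈ Finset.range (m + 1),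
      ((4 : ℝ) ^ d)⁻¹ / (Nat.factorial (m - d)) =
        ((4 : ℝ) ^ (m - d) / (Nat.factorial (m - d))) / 4 ^ m := by
    intro d hd
    rw [Finset.mem_range] at hd
    have hdm : d ≤ m := Nat.lt_succ_iff.mp hd
    rw [pow_sub₀ (4 : ℝ) (by norm_num) hdm]
    field_simp
  rw [Finset.sum_congr rfl heq, ← Finset.sum_div]
  exact div_le_div_of_nonneg_right hA (by positivity) |>.trans_eq rfl

theorem stmt_17 {X : Type*} [Fintype X] [Nonempty X] {k n m : ℕ} (hm : 3 ≤ m) (hn : 0 < n)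
    (h : Fin n → X → Fin k → ℝ) (t : Fin n → Fin n → ℕ)
    (hnorm : ∀ i, ip (h i) (h i) = 1)
    (hoff : ∀ i j, i ≠ j → |ip (h i) (h j)| ≤ (2 : ℝ) ^ (-(t i j : ℝ)))
    (hrange : ∀ i j, i ≠ j → t i j = m ∨ (2 ≤ t i j ∧ t i j ≤ m - 1))
    (hfrac : ∀ d, 2 ≤ d → d ≤ m - 1 →
      ((Finset.univ.filter (fun p : Fin n × Fin n => p.1 ≠ p.2 ∧ t p.1 p.2 = d)).card : ℝ) /
        (n : ℝ) ^ 2 ≤ 1 / (Nat.factorial (m - d))) :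
    (∑ i : Fin n, ∑ j : Fin n, (ip (h i) (h j) - if i = j then 1 else 0) ^ 2) / (n : ℝ) ^ 2 ≤
      Real.exp 4 * (4 : ℝ) ^ (-(m : ℝ)) := by
  classical
  have hn2 : (0 : ℝ) < (n : ℝ) ^ 2 := by positivity
  set F : Finset (Fin n × Fin n) := Finset.univ.filter (fun p => p.1 ≠ p.2) with hF
  -- Step 1: termwise bound
  have hstep1 :
      (∑ i : Fin n, ∑ j : Fin n, (ip (h i) (h j) - if i = j then 1 else 0) ^ 2) ≤
        ∑ p ∈ F, ((4 : ℝ) ^ (t p.1 p.2))⁻¹ := by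
    rw [← Finset.sum_product']
    rw [Finset.sum_filter]
    apply Finset.sum_le_sum
    intro p _
    by_cases hp : p.1 = p.2
    · simp [hp, hnorm]
    · rw [if_pos hp, if_neg hp, sub_zero]
      have h1 := hoff p.1 p.2 hp
      have h2 : (2 : ℝ) ^ (-(t p.1 p.2 : ℝ)) = ((2 : ℝ) ^ (t p.1 p.2))⁻¹ := by
        rw [Real.rpow_neg (by norm_num), Real.rpow_natCast]
      rw [h2] at h1
      calc ip (h p.1) (h p.2) ^ 2 = |ip (h p.1) (h p.2)| ^ 2 := (sq_abs _).symm
        _ ≤ (((2 : ℝ) ^ (t p.1 p.2))⁻¹) ^ 2 := pow_le_pow_left₀ (abs_nonneg _) h1 2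
        _ = ((4 : ℝ) ^ (t p.1 p.2))⁻¹ := by
            rw [← inv_pow, ← pow_mul, mul_comm (t p.1 p.2) 2, pow_mul]
            norm_num [← inv_pow]
  -- Step 2: fiberwise decomposition
  have hmaps : ∀ p ∈ F, t p.1 p.2 ∈ Finset.range (m + 1) := by
    intro p hp
    rw [hF, Finset.mem_filter] at hp
    rw [Finset.mem_range, Nat.lt_succ_iff]
    rcases hrange p.1 p.2 hp.2 with h' | h'
    · omega
    · omega
  have hfib := Finset.sum_fiberwise_of_maps_to hmaps (fun p => ((4 : ℝ) ^ (t p.1 p.2))⁻¹)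
  -- Step 3: card bounds
  have hcard : ∀ d ∈ Finset.range (m + 1),
      ((F.filter (fun p => t p.1 p.2 = d)).card : ℝ) ≤ (n : ℝ) ^ 2 / (Nat.factorial (m - d)) := by
    intro d hd
    rw [Finset.mem_range, Nat.lt_succ_iff] at hd
    have hff : F.filter (fun p => t p.1 p.2 = d) =
        Finset.univ.filter (fun p : Fin n × Fin n => p.1 ≠ p.2 ∧ t p.1 p.2 = d) := by
      rw [hF, Finset.filter_filter]
    rcases eq_or_ne d m with rfl | hdm
    · simp only [Nat.sub_self, Nat.factorial_zero, Nat.cast_one, div_one]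
      calc ((F.filter (fun p => t p.1 p.2 = d)).card : ℝ) ≤ (Finset.univ : Finset (Fin n × Fin n)).card := by
            exact_mod_cast Nat.cast_le.mpr (Finset.card_le_card (Finset.filter_subset _ _ |>.trans (hF ▸ Finset.filter_subset _ _)))
        _ = (n : ℝ) ^ 2 := by simp [sq]
    · by_cases hd2 : 2 ≤ d
      · have hfp : (0 : ℝ) < (Nat.factorial (m - d) : ℝ) := by positivity
        have h2 := hfrac d hd2 (by omega)
        rw [div_le_div_iff₀ hn2 hfp] at h2
        rw [hff, le_div_iff₀ hfp]
        linarith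
      · -- d < 2 : fiber is empty
        have : F.filter (fun p => t p.1 p.2 = d) = ∅ := by
          rw [hff, Finset.filter_eq_empty_iff]
          intro p _
          rintro ⟨hne, htd⟩
          rcases hrange p.1 p.2 hne with h' | h' <;> omega
        rw [this]
        simp
        positivity
  -- Step 4: combine
  have hstep2 : ∑ p ∈ F, ((4 : ℝ) ^ (t p.1 p.2))⁻¹ ≤
      (n : ℝ) ^ 2 * ∑ d ∈ Finset.range (m + 1), ((4 : ℝ) ^ d)⁻¹ / (Nat.factorial (m - d)) := by
    rw [← hfib, Finset.mul_sum]
    apply Finset.sum_le_sum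
    intro d hd
    have hinner : ∑ p ∈ F.filter (fun p => t p.1 p.2 = d), ((4 : ℝ) ^ (t p.1 p.2))⁻¹ =
        ((F.filter (fun p => t p.1 p.2 = d)).card : ℝ) * ((4 : ℝ) ^ d)⁻¹ := by
      calc ∑ p ∈ F.filter (fun p => t p.1 p.2 = d), ((4 : ℝ) ^ (t p.1 p.2))⁻¹
          = ∑ _p ∈ F.filter (fun p => t p.1 p.2 = d), ((4 : ℝ) ^ d)⁻¹ :=
            Finset.sum_congr rfl (fun p hp => by rw [(Finset.mem_filter.mp hp).2])
        _ = _ := by rw [Finset.sum_const, nsmul_eq_mul]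
    rw [hinner]
    calc ((F.filter (fun p => t p.1 p.2 = d)).card : ℝ) * ((4 : ℝ) ^ d)⁻¹
        ≤ ((n : ℝ) ^ 2 / (Nat.factorial (m - d))) * ((4 : ℝ) ^ d)⁻¹ :=
          mul_le_mul_of_nonneg_right (hcard d hd) (by positivity)
      _ = (n : ℝ) ^ 2 * (((4 : ℝ) ^ d)⁻¹ / (Nat.factorial (m - d))) := by ring
  have hfinal : (4 : ℝ) ^ (-(m : ℝ)) = ((4 : ℝ) ^ m)⁻¹ := by
    rw [Real.rpow_neg (by norm_num), Real.rpow_natCast]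
  rw [hfinal, div_le_iff₀ hn2]
  calc (∑ i : Fin n, ∑ j : Fin n, (ip (h i) (h j) - if i = j then 1 else 0) ^ 2)
      ≤ ∑ p ∈ F, ((4 : ℝ) ^ (t p.1 p.2))⁻¹ := hstep1
    _ ≤ (n : ℝ) ^ 2 * ∑ d ∈ Finset.range (m + 1), ((4 : ℝ) ^ d)⁻¹ / (Nat.factorial (m - d)) :=
        hstep2
    _ ≤ (n : ℝ) ^ 2 * (Real.exp 4 / 4 ^ m) :=
        mul_le_mul_of_nonneg_left (key_sum m) hn2.le
    _ = Real.exp 4 * ((4 : ℝ) ^ m)⁻¹ * (n : ℝ) ^ 2 := by ring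
end
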